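/- arXiv:1902.06687 — 5 statements merged into one kernel-verified Lean document; each statement's English description precedes it below -/
import Mathlib

section
/- Let (Ω, P) be a probability space, let x_1, …, x_N and q be elements of a set V, let L : Ω → (V → H) be a random hash function with measurable collision events, and let p_i = P{ω : L(ω)(x_i) = L(ω)(q)}. For real coefficients r_1, …, r_N with |r_i| ≤ 1 for all i, the weighted ACE count Z(ω) = Σ_{i=1}^N r_i · 1{L(ω)(x_i) = L(ω)(q)} satisfies Var(Z) ≤ E[Z²] ≤ (Σ_{i=1}^N |r_i| √p_i)² ≤ (Σ_{i=1}^N √p_i)². -/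
open MeasureTheory ProbabilityTheory

/-- Variance bound for the weighted ACE count: with coefficients `|r i| ≤ 1`,
`Var(Z) ≤ E[Z²] ≤ (∑ i, |r i| √(p i))² ≤ (∑ i, √(p i))²`. -/
theorem weighted_ace_variance_bound {Ω V H : Type*} [MeasurableSpace Ω]
    (P : Measure Ω) [IsProbabilityMeasure P]
    (N : ℕ) (x : Fin N → V) (q : V) (L : Ω → V → H)
    (hmeas : ∀ i, MeasurableSet {ω | L ω (x i) = L ω q})
    (p : Fin N → ℝ)
    (hprob : ∀ i, (P {ω | L ω (x i) = L ω q}).toReal = p i)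
    (r : Fin N → ℝ) (hr : ∀ i, |r i| ≤ 1) :
    variance (fun ω =>
        ∑ i, r i * Set.indicator {ω' | L ω' (x i) = L ω' q} (fun _ => (1 : ℝ)) ω) P
      ≤ ∫ ω, (∑ i, r i *
          Set.indicator {ω' | L ω' (x i) = L ω' q} (fun _ => (1 : ℝ)) ω) ^ 2 ∂P ∧
    ∫ ω, (∑ i, r i *
        Set.indicator {ω' | L ω' (x i) = L ω' q} (fun _ => (1 : ℝ)) ω) ^ 2 ∂P
      ≤ (∑ i, |r i| * Real.sqrt (p i)) ^ 2 ∧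
    (∑ i, |r i| * Real.sqrt (p i)) ^ 2 ≤ (∑ i, Real.sqrt (p i)) ^ 2 := by
  set A : Fin N → Set Ω := fun i => {ω | L ω (x i) = L ω q} with hA
  set f : Fin N → Ω → ℝ := fun i => Set.indicator (A i) (fun _ => (1 : ℝ)) with hf
  have hp_nonneg : ∀ i, 0 ≤ p i := fun i => (hprob i) ▸ ENNReal.toReal_nonneg
  have hf_meas : ∀ i, Measurable (f i) := fun i =>
    (measurable_const.indicator (hmeas i))
  have hf_nonneg : ∀ i ω, 0 ≤ f i ω := fun i ω =>
    Set.indicator_nonneg (fun _ _ => zero_le_one) ω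
  have hf_le_one : ∀ i ω, f i ω ≤ 1 := fun i ω =>
    Set.indicator_apply_le' (fun _ => le_rfl) (fun _ => zero_le_one)
  have hZ_meas : Measurable (fun ω => ∑ i, r i * f i ω) := by
    exact Finset.measurable_sum _ fun i _ => (hf_meas i).const_mul _
  -- integrability of products of indicators
  have hint_prod : ∀ i j : Fin N, Integrable (fun ω => f i ω * f j ω) P := by
    intro i j
    refine Integrable.mono' (integrable_const (1 : ℝ))
      ((hf_meas i).mul (hf_meas j)).aestronglyMeasurable ?_
    filter_upwards with ω
    rw [Real.norm_eq_abs, abs_of_nonneg (mul_nonneg (hf_nonneg i ω) (hf_nonneg j ω))]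
    exact mul_le_one₀ (hf_le_one i ω) (hf_nonneg j ω) (hf_le_one j ω)
  -- key: ∫ f i * f j ≤ √(p i) * √(p j)
  have hkey : ∀ i j : Fin N, (∫ ω, f i ω * f j ω ∂P) ≤ Real.sqrt (p i) * Real.sqrt (p j) := by
    intro i j
    have heq : ∀ ω, f i ω * f j ω = Set.indicator (A i ∩ A j) (fun _ => (1 : ℝ)) ω := by
      intro ω
      simp only [hf]
      rw [← Set.inter_indicator_mul]
      simp
    have : (∫ ω, f i ω * f j ω ∂P) = (P (A i ∩ A j)).toReal := by
      simp_rw [heq]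
      exact integral_indicator_one ((hmeas i).inter (hmeas j))
    rw [this]
    have hfin : P (A i ∩ A j) ≠ ⊤ := measure_ne_top _ _
    have hle_i : (P (A i ∩ A j)).toReal ≤ p i := by
      rw [← hprob i]
      exact ENNReal.toReal_mono (measure_ne_top _ _) (measure_mono Set.inter_subset_left)
    have hle_j : (P (A i ∩ A j)).toReal ≤ p j := by
      rw [← hprob j]
      exact ENNReal.toReal_mono (measure_ne_top _ _) (measure_mono Set.inter_subset_right)
    have hc : 0 ≤ (P (A i ∩ A j)).toReal := ENNReal.toReal_nonneg
    calc (P (A i ∩ A j)).toReal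
        = Real.sqrt ((P (A i ∩ A j)).toReal * (P (A i ∩ A j)).toReal) :=
          (Real.sqrt_mul_self hc).symm
      _ ≤ Real.sqrt (p i * p j) :=
          Real.sqrt_le_sqrt (mul_le_mul hle_i hle_j hc (hp_nonneg i))
      _ = Real.sqrt (p i) * Real.sqrt (p j) := Real.sqrt_mul (hp_nonneg i) _
  -- integrability of the dominating square
  have hg_meas : Measurable (fun ω => (∑ i, |r i| * f i ω) ^ 2) := by
    exact (Finset.measurable_sum _ fun i _ => (hf_meas i).const_mul _).pow_const 2
  have hg_int : Integrable (fun ω => (∑ i, |r i| * f i ω) ^ 2) P := by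
    refine Integrable.mono' (integrable_const ((N : ℝ) ^ 2)) hg_meas.aestronglyMeasurable ?_
    filter_upwards with ω
    have h1 : 0 ≤ ∑ i, |r i| * f i ω :=
      Finset.sum_nonneg fun i _ => mul_nonneg (abs_nonneg _) (hf_nonneg i ω)
    have h2 : ∑ i, |r i| * f i ω ≤ (N : ℝ) := by
      calc ∑ i, |r i| * f i ω ≤ ∑ _i : Fin N, (1 : ℝ) :=
            Finset.sum_le_sum fun i _ =>
              mul_le_one₀ (hr i) (hf_nonneg i ω) (hf_le_one i ω)
        _ = (N : ℝ) := by simp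
    rw [Real.norm_eq_abs, abs_of_nonneg (pow_nonneg h1 2)]
    exact pow_le_pow_left₀ h1 h2 2
  -- pointwise bound Z² ≤ (∑ |r i| f i)²
  have hptwise : ∀ ω, (∑ i, r i * f i ω) ^ 2 ≤ (∑ i, |r i| * f i ω) ^ 2 := by
    intro ω
    have h1 : |∑ i, r i * f i ω| ≤ ∑ i, |r i| * f i ω := by
      calc |∑ i, r i * f i ω| ≤ ∑ i, |r i * f i ω| := Finset.abs_sum_le_sum_abs _ _
        _ = ∑ i, |r i| * f i ω := by
            refine Finset.sum_congr rfl fun i _ => ?_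
            rw [abs_mul, abs_of_nonneg (hf_nonneg i ω)]
    calc (∑ i, r i * f i ω) ^ 2 = |∑ i, r i * f i ω| ^ 2 := (sq_abs _).symm
      _ ≤ (∑ i, |r i| * f i ω) ^ 2 :=
          pow_le_pow_left₀ (abs_nonneg _) h1 2
  -- middle bound
  have hmid : ∫ ω, (∑ i, r i * f i ω) ^ 2 ∂P ≤ (∑ i, |r i| * Real.sqrt (p i)) ^ 2 := by
    have step1 : ∫ ω, (∑ i, r i * f i ω) ^ 2 ∂P ≤ ∫ ω, (∑ i, |r i| * f i ω) ^ 2 ∂P := by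
      refine integral_mono_of_nonneg ?_ hg_int ?_
      · filter_upwards with ω; exact sq_nonneg _
      · filter_upwards with ω; exact hptwise ω
    have step2 : ∫ ω, (∑ i, |r i| * f i ω) ^ 2 ∂P
        = ∑ i, ∑ j, |r i| * |r j| * ∫ ω, f i ω * f j ω ∂P := by
      have heq : ∀ ω, (∑ i, |r i| * f i ω) ^ 2
          = ∑ i, ∑ j, |r i| * |r j| * (f i ω * f j ω) := by
        intro ω
        rw [sq, Finset.sum_mul_sum]
        refine Finset.sum_congr rfl fun i _ => Finset.sum_congr rfl fun j _ => ?_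
        ring
      simp_rw [heq]
      rw [integral_finset_sum]
      · refine Finset.sum_congr rfl fun i _ => ?_
        rw [integral_finset_sum]
        · refine Finset.sum_congr rfl fun j _ => ?_
          exact integral_const_mul _ _
        · exact fun j _ => (hint_prod i j).const_mul _
      · intro i _
        exact integrable_finset_sum _ fun j _ => (hint_prod i j).const_mul _
    have step3 : ∑ i, ∑ j, |r i| * |r j| * ∫ ω, f i ω * f j ω ∂P
        ≤ (∑ i, |r i| * Real.sqrt (p i)) ^ 2 := by
      rw [sq, Finset.sum_mul_sum]
      refine Finset.sum_le_sum fun i _ => Finset.sum_le_sum fun j _ => ?_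
      have := hkey i j
      have hnn : 0 ≤ |r i| * |r j| := mul_nonneg (abs_nonneg _) (abs_nonneg _)
      calc |r i| * |r j| * ∫ ω, f i ω * f j ω ∂P
          ≤ |r i| * |r j| * (Real.sqrt (p i) * Real.sqrt (p j)) :=
            mul_le_mul_of_nonneg_left (hkey i j) hnn
        _ = |r i| * Real.sqrt (p i) * (|r j| * Real.sqrt (p j)) := by ring
    exact step1.trans (step2 ▸ step3)
  refine ⟨?_, hmid, ?_⟩
  · have := variance_le_expectation_sq (μ := P)
      (X := fun ω => ∑ i, r i * f i ω) hZ_meas.aestronglyMeasurable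
    simpa [Pi.pow_apply] using this
  · have h1 : ∑ i, |r i| * Real.sqrt (p i) ≤ ∑ i, Real.sqrt (p i) :=
      Finset.sum_le_sum fun i _ => by
        calc |r i| * Real.sqrt (p i) ≤ 1 * Real.sqrt (p i) :=
              mul_le_mul_of_nonneg_right (hr i) (Real.sqrt_nonneg _)
          _ = Real.sqrt (p i) := one_mul _
    have h0 : 0 ≤ ∑ i, |r i| * Real.sqrt (p i) :=
      Finset.sum_nonneg fun i _ => mul_nonneg (abs_nonneg _) (Real.sqrt_nonneg _)
    exact pow_le_pow_left₀ h0 h1 2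
end

section
/- Let μ ∈ ℝ and ε > 0, and let Y_1, …, Y_k be mutually independent real random variables on a probability space such that P(|Y_j − μ| > ε) ≤ 1/4 for every j. Then any median M of Y_1, …, Y_k (an element m of the sample such that at least half of the Y_j are ≤ m and at least half are ≥ m) satisfies P(|M − μ| > ε) ≤ exp(−k/8). -/
/-!
If a median is more than `ε` away from `μ`, then so are all the samples on one side of it,
that is at least half of them. The number of far samples is a sum of `k` independent
indicators of mean at most `1/4`, so by Hoeffding's inequality it reaches
`k/2 = (1/4 + 1/4) k` with probability at most `exp (-2 (1/4)² k) = exp (-k/8)`.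
-/

open MeasureTheory ProbabilityTheory Finset

theorem hasSubgaussianMGF_indicator_sub_measureReal {Ω β : Type*} [MeasurableSpace Ω]
    [MeasurableSpace β] {P : Measure Ω} [IsProbabilityMeasure P] {X : Ω → β}
    (hX : Measurable X) {S : Set β} (hS : MeasurableSet S) :
    HasSubgaussianMGF (fun ω => S.indicator 1 (X ω) - P.real (X ⁻¹' S)) (1 / 4) P := by
  have h01 (ω : Ω) : S.indicator (1 : β → ℝ) (X ω) ∈ Set.Icc 0 1 := by
    by_cases h : X ω ∈ S <;> simp [h]
  have hmean : P[fun ω => S.indicator (1 : β → ℝ) (X ω)] = P.real (X ⁻¹' S) := by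
    rw [← integral_indicator_one (hS.preimage hX)]
    rfl
  have h := hasSubgaussianMGF_of_mem_Icc ((measurable_one.indicator hS).comp hX).aemeasurable
    (ae_of_all P h01)
  rw [Function.comp_def, hmean] at h
  convert h using 1
  norm_num

theorem measureReal_card_mem_ge_le {Ω ι β : Type*} [MeasurableSpace Ω] [MeasurableSpace β]
    [Fintype ι] {P : Measure Ω} [IsProbabilityMeasure P] {Y : ι → Ω → β}
    (hY : ∀ i, Measurable (Y i)) (hY_indep : iIndepFun Y P)
    {S : Set β} [DecidablePred (· ∈ S)] (hS : MeasurableSet S)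
    {p t : ℝ} (hp : ∀ i, P.real (Y i ⁻¹' S) ≤ p) (ht : 0 ≤ t) :
    P.real {ω | (p + t) * Fintype.card ι ≤ #{i | Y i ω ∈ S}} ≤
      Real.exp (-2 * t ^ 2 * Fintype.card ι) := by
  set n : ℝ := (Fintype.card ι : ℝ)
  set ind : β → ℝ := S.indicator 1
  have hindep : iIndepFun (fun i ω => ind (Y i ω) - P.real (Y i ⁻¹' S)) P :=
    hY_indep.comp (fun i x => ind x - P.real (Y i ⁻¹' S))
      fun _ => (measurable_one.indicator hS).sub_const _
  have hsub : {ω | (p + t) * n ≤ #{i | Y i ω ∈ S}} ⊆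
      {ω | t * n ≤ ∑ i, (ind (Y i ω) - P.real (Y i ⁻¹' S))} := by
    intro ω hω
    have hcount : ∑ i, ind (Y i ω) = #{i | Y i ω ∈ S} := by
      simp [ind, Set.indicator_apply, Finset.sum_boole]
    have hmean_sum : ∑ i, P.real (Y i ⁻¹' S) ≤ p * n := by
      simpa [n, mul_comm] using Finset.sum_le_sum fun i (_ : i ∈ univ) => hp i
    simp only [Set.mem_ofPred_eq, Finset.sum_sub_distrib, hcount] at hω ⊢
    linarith
  calc P.real {ω | (p + t) * n ≤ #{i | Y i ω ∈ S}}
      ≤ P.real {ω | t * n ≤ ∑ i, (ind (Y i ω) - P.real (Y i ⁻¹' S))} :=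
        measureReal_mono hsub
    _ ≤ Real.exp (-(t * n) ^ 2 / (2 * ∑ _i : ι, (1 / 4 : NNReal))) :=
      HasSubgaussianMGF.measure_sum_ge_le_of_iIndepFun hindep
        (fun i _ => hasSubgaussianMGF_indicator_sub_measureReal (hY i) hS)
        (by positivity)
    _ = Real.exp (-2 * t ^ 2 * n) := by
      rcases eq_or_ne n 0 with hn | hn
      · simp [hn]
      · congr 1; simp [n] at hn ⊢; field_simp; ring

theorem card_le_two_mul_card_lt_abs_sub_of_median {ι : Type*} [Fintype ι] {y : ι → ℝ}
    {m μ ε : ℝ} (hlo : Fintype.card ι ≤ 2 * #{j | y j ≤ m})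
    (hhi : Fintype.card ι ≤ 2 * #{j | m ≤ y j}) (hm : ε < |m - μ|) :
    Fintype.card ι ≤ 2 * #{j | ε < |y j - μ|} := by
  rcases lt_abs.mp hm with hm | hm
  · refine hhi.trans (Nat.mul_le_mul_left 2 (card_le_card fun j hj => ?_))
    simp only [mem_filter, mem_univ, true_and] at hj ⊢
    exact lt_abs.mpr (Or.inl (by linarith))
  · refine hlo.trans (Nat.mul_le_mul_left 2 (card_le_card fun j hj => ?_))
    simp only [mem_filter, mem_univ, true_and] at hj ⊢
    exact lt_abs.mpr (Or.inr (by linarith))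

theorem median_concentration_general {Ω : Type*} [MeasurableSpace Ω]
    (P : Measure Ω) [IsProbabilityMeasure P]
    (k : ℕ) (μ ε : ℝ)
    (Y : Fin k → Ω → ℝ) (hYm : ∀ j, Measurable (Y j))
    (hindep : iIndepFun Y P)
    (hfail : ∀ j, P {ω | ε < |Y j ω - μ|} ≤ 1 / 4)
    (M : Ω → ℝ)
    (hlo : ∀ ω, k ≤ 2 * (Finset.univ.filter (fun j : Fin k => Y j ω ≤ M ω)).card)
    (hhi : ∀ ω, k ≤ 2 * (Finset.univ.filter (fun j : Fin k => M ω ≤ Y j ω)).card) :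
    P {ω | ε < |M ω - μ|} ≤ ENNReal.ofReal (Real.exp (-(k : ℝ) / 8)) := by
  set S : Set ℝ := {x | ε < |x - μ|}
  have hS : MeasurableSet S := measurableSet_lt measurable_const (by fun_prop)
  have hp (j : Fin k) : P.real (Y j ⁻¹' S) ≤ 1 / 4 :=
    (ENNReal.toReal_mono (by norm_num) (hfail j)).trans_eq (by norm_num)
  have hsub : {ω | ε < |M ω - μ|} ⊆
      {ω | (1 / 4 + 1 / 4 : ℝ) * Fintype.card (Fin k) ≤ #{j | Y j ω ∈ S}} := by
    intro ω hω
    have hfar := card_le_two_mul_card_lt_abs_sub_of_median (y := fun j => Y j ω)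
      (by rw [Fintype.card_fin]; exact hlo ω) (by rw [Fintype.card_fin]; exact hhi ω) hω
    have hfar_real : (Fintype.card (Fin k) : ℝ) ≤ 2 * #{j | Y j ω ∈ S} := by
      exact_mod_cast hfar
    rw [Set.mem_ofPred_eq]
    linarith
  rw [← ofReal_measureReal]
  refine ENNReal.ofReal_le_ofReal ?_
  calc P.real {ω | ε < |M ω - μ|}
      ≤ P.real {ω | (1 / 4 + 1 / 4 : ℝ) * Fintype.card (Fin k) ≤ #{j | Y j ω ∈ S}} :=
        measureReal_mono hsub
    _ ≤ Real.exp (-2 * (1 / 4) ^ 2 * Fintype.card (Fin k)) :=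
        measureReal_card_mem_ge_le hYm hindep hS hp (t := 1 / 4) (by norm_num)
    _ = Real.exp (-(k : ℝ) / 8) := by
        rw [Fintype.card_fin]; ring_nf

/-- Median trick: if `Y 1, …, Y k` are mutually independent real random variables each
deviating from `μ` by more than `ε` with probability at most `1/4`, then any median `M`
of the sample (a sample value such that at least half of the `Y j` are `≤ M` and at
least half are `≥ M`) deviates from `μ` by more than `ε` with probability at most
`exp (-k/8)`. -/
theorem median_concentration {Ω : Type*} [MeasurableSpace Ω]
    (P : Measure Ω) [IsProbabilityMeasure P]
    (k : ℕ) (μ ε : ℝ) (hε : 0 < ε)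
    (Y : Fin k → Ω → ℝ) (hYm : ∀ j, Measurable (Y j))
    (hindep : iIndepFun Y P)
    (hfail : ∀ j, P {ω | ε < |Y j ω - μ|} ≤ 1 / 4)
    (M : Ω → ℝ)
    (hmem : ∀ ω, ∃ j, M ω = Y j ω)
    (hlo : ∀ ω, k ≤ 2 * (Finset.univ.filter (fun j : Fin k => Y j ω ≤ M ω)).card)
    (hhi : ∀ ω, k ≤ 2 * (Finset.univ.filter (fun j : Fin k => M ω ≤ Y j ω)).card) :
    P {ω | ε < |M ω - μ|} ≤ ENNReal.ofReal (Real.exp (-(k : ℝ) / 8)) :=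
  median_concentration_general P k μ ε Y hYm hindep hfail M hlo hhi
end

section
/- Let s ∈ ℝ^N have nonnegative entries, let ε > 0, fix a coordinate j, and let H : Ω → (Fin N → Fin w) be a random hash function on a probability space (Ω, P) such that P(H(j') = H(j)) ≤ 1/w for every j' ≠ j. Then the overcount of coordinate j in one Count-Min Sketch row satisfies E[Σ_{j' ≠ j, H(j') = H(j)} s_{j'}] ≤ |s|₁ / w, and consequently P(Σ_{j' ≠ j, H(j') = H(j)} s_{j'} > ε |s|₁) ≤ 1/(ε w). -/
/-!
The overcount is `∑_{j' ≠ j} s j' · 1[H j' = H j]`, so by linearity of expectation and the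
collision bound its mean is at most `|s|₁ / w`. Being nonnegative, it exceeds `ε |s|₁` with
probability at most `(|s|₁ / w) / (ε |s|₁) = 1 / (ε w)` by Markov's inequality.
-/

open Finset MeasureTheory
open scoped ENNReal

namespace MeasureTheory

section EventCount

variable {Ω ι : Type*} {A : ι → Set Ω} [∀ i, DecidablePred (· ∈ A i)]

lemma sum_filter_mem_eq_sum_indicator (I : Finset ι) (c : ι → ℝ) (ω : Ω) :
    ∑ i ∈ I with ω ∈ A i, c i = ∑ i ∈ I, (A i).indicator (fun _ => c i) ω := by
  simp only [sum_filter, Set.indicator_apply]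

variable [MeasurableSpace Ω] {P : Measure Ω} [IsFiniteMeasure P]

lemma integrable_sum_filter_mem (hA : ∀ i, MeasurableSet (A i)) (I : Finset ι) (c : ι → ℝ) :
    Integrable (fun ω => ∑ i ∈ I with ω ∈ A i, c i) P := by
  simp_rw [sum_filter_mem_eq_sum_indicator]
  exact integrable_finsetSum _ fun i _ => (integrable_const _).indicator (hA i)

lemma integral_sum_filter_mem (hA : ∀ i, MeasurableSet (A i)) (I : Finset ι) (c : ι → ℝ) :
    ∫ ω, ∑ i ∈ I with ω ∈ A i, c i ∂P = ∑ i ∈ I, P.real (A i) * c i := by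
  simp_rw [sum_filter_mem_eq_sum_indicator]
  rw [integral_finsetSum _ fun i _ => (integrable_const _).indicator (hA i)]
  simp_rw [integral_indicator_const _ (hA _), smul_eq_mul]

lemma integral_sum_filter_mem_le (hA : ∀ i, MeasurableSet (A i)) {I : Finset ι} {c : ι → ℝ}
    (hc : ∀ i ∈ I, 0 ≤ c i) {p : ℝ≥0∞} (hp : p ≠ ∞) (hAp : ∀ i ∈ I, P (A i) ≤ p) :
    ∫ ω, ∑ i ∈ I with ω ∈ A i, c i ∂P ≤ p.toReal * ∑ i ∈ I, c i := by
  rw [integral_sum_filter_mem hA, mul_sum]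
  exact sum_le_sum fun i hi =>
    mul_le_mul_of_nonneg_right (ENNReal.toReal_mono hp (hAp i hi)) (hc i hi)

end EventCount

variable {Ω : Type*} [MeasurableSpace Ω] {P : Measure Ω} [IsFiniteMeasure P]

lemma measure_lt_le_ofReal_integral_div {X : Ω → ℝ} (hX : 0 ≤ᵐ[P] X) (hXint : Integrable X P)
    {t : ℝ} (ht : 0 < t) : P {ω | t < X ω} ≤ ENNReal.ofReal ((∫ ω, X ω ∂P) / t) :=
  calc P {ω | t < X ω} ≤ P {ω | t ≤ X ω} := measure_mono fun _ (h : t < _) => h.le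
    _ = ENNReal.ofReal (P.real {ω | t ≤ X ω}) := (ofReal_measureReal (measure_ne_top _ _)).symm
    _ ≤ ENNReal.ofReal ((∫ ω, X ω ∂P) / t) := by
      gcongr
      rw [le_div_iff₀ ht, mul_comm]
      exact mul_meas_ge_le_integral_of_nonneg hX hXint t

lemma measure_mul_lt_le_of_integral_le_div {X : Ω → ℝ} {L r ε : ℝ} (hX : ∀ ω, 0 ≤ X ω)
    (hXL : ∀ ω, X ω ≤ L) (hXint : Integrable X P) (hε : 0 < ε)
    (hmean : ∫ ω, X ω ∂P ≤ L / r) : P {ω | ε * L < X ω} ≤ ENNReal.ofReal (1 / (ε * r)) := by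
  rcases le_or_gt L 0 with hL | hL
  · have hempty : {ω | ε * L < X ω} = ∅ :=
      Set.eq_empty_of_forall_notMem fun ω (hω : ε * L < X ω) => by
        nlinarith [hX ω, hXL ω]
    simp [hempty]
  calc P {ω | ε * L < X ω} ≤ ENNReal.ofReal ((∫ ω, X ω ∂P) / (ε * L)) :=
        measure_lt_le_ofReal_integral_div (Filter.Eventually.of_forall hX) hXint (by positivity)
    _ ≤ ENNReal.ofReal (L / r / (ε * L)) := by gcongr
    _ = ENNReal.ofReal (1 / (ε * r)) := by field_simp

end MeasureTheory

theorem count_min_row_overcount_general {Ω : Type*} [MeasurableSpace Ω]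
    (P : Measure Ω) [IsProbabilityMeasure P]
    (N w : ℕ)
    (s : Fin N → ℝ) (hs : ∀ j, 0 ≤ s j)
    (ε : ℝ) (hε : 0 < ε) (j : Fin N)
    (H : Ω → Fin N → Fin w)
    (hmeas : ∀ j', MeasurableSet {ω | H ω j' = H ω j})
    (hcol : ∀ j', j' ≠ j → P {ω | H ω j' = H ω j} ≤ ((w : ℝ≥0∞))⁻¹) :
    (∫ ω, ∑ j' ∈ Finset.univ.filter (fun j' => j' ≠ j ∧ H ω j' = H ω j), s j' ∂P
        ≤ (∑ j', s j') / (w : ℝ)) ∧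
    P {ω | ε * ∑ j', s j'
        < ∑ j' ∈ Finset.univ.filter (fun j' => j' ≠ j ∧ H ω j' = H ω j), s j'}
      ≤ ENNReal.ofReal (1 / (ε * (w : ℝ))) := by
  obtain ⟨ω₀⟩ := nonempty_of_isProbabilityMeasure P
  have hw : 0 < w := (H ω₀ j).pos
  have hcount (ω : Ω) : univ.filter (fun j' => j' ≠ j ∧ H ω j' = H ω j)
      = (univ.filter (· ≠ j)).filter (fun j' => ω ∈ {ω | H ω j' = H ω j}) :=
    (filter_filter _ _ _).symm
  simp_rw [hcount]
  have hmean : ∫ ω, ∑ j' ∈ univ.filter (· ≠ j) with ω ∈ {ω | H ω j' = H ω j}, s j' ∂P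
      ≤ (∑ j', s j') / w :=
    calc _ ≤ ((w : ℝ≥0∞)⁻¹).toReal * ∑ j' ∈ univ.filter (· ≠ j), s j' :=
          integral_sum_filter_mem_le hmeas (fun j' _ => hs j') (by simpa using hw.ne')
            fun j' hj' => hcol j' (mem_filter.1 hj').2
      _ ≤ (w : ℝ)⁻¹ * ∑ j', s j' := by
          rw [ENNReal.toReal_inv, ENNReal.toReal_natCast]
          exact mul_le_mul_of_nonneg_left (sum_le_univ_sum_of_nonneg hs) (by positivity)
      _ = (∑ j', s j') / w := inv_mul_eq_div _ _
  refine ⟨hmean, measure_mul_lt_le_of_integral_le_div (fun ω => sum_nonneg fun j' _ => hs j')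
    (fun ω => sum_le_univ_sum_of_nonneg hs)
    (integrable_sum_filter_mem hmeas _ _) hε hmean⟩

/-- For one Count-Min Sketch row with a universal random hash (pairwise collision
probability at most `1/w`), the expected overcount of coordinate `j` is at most
`|s|₁ / w`, and by Markov's inequality the overcount exceeds `ε |s|₁` with probability
at most `1/(ε w)`. -/
theorem count_min_row_overcount {Ω : Type*} [MeasurableSpace Ω]
    (P : Measure Ω) [IsProbabilityMeasure P]
    (N w : ℕ) (hw : 1 ≤ w)
    (s : Fin N → ℝ) (hs : ∀ j, 0 ≤ s j)
    (ε : ℝ) (hε : 0 < ε) (j : Fin N)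
    (H : Ω → Fin N → Fin w)
    (hmeas : ∀ j', MeasurableSet {ω | H ω j' = H ω j})
    (hcol : ∀ j', j' ≠ j → P {ω | H ω j' = H ω j} ≤ ((w : ℝ≥0∞))⁻¹) :
    (∫ ω, ∑ j' ∈ Finset.univ.filter (fun j' => j' ≠ j ∧ H ω j' = H ω j), s j' ∂P
        ≤ (∑ j', s j') / (w : ℝ)) ∧
    P {ω | ε * ∑ j', s j'
        < ∑ j' ∈ Finset.univ.filter (fun j' => j' ≠ j ∧ H ω j' = H ω j), s j'}
      ≤ ENNReal.ofReal (1 / (ε * (w : ℝ))) :=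
  count_min_row_overcount_general P N w s hs ε hε j H hmeas hcol
end

section
/- Let s ∈ ℝ^N have nonnegative entries, let ε > 0 and δ ∈ (0,1), let w ≥ e/ε and d ≥ ln(N/δ), and let H_1, …, H_d : Ω → (Fin N → Fin w) be mutually independent random hash functions on a probability space (Ω, P) such that for each i and every pair j ≠ j', P(H_i(j') = H_i(j)) ≤ 1/w. Define the Count-Min Sketch CMS(i, c) = Σ_{j' : H_i(j') = c} s_{j'} and recovery ŝ_j = min_{1 ≤ i ≤ d} CMS(i, H_i(j)). Then with probability at least 1 − δ, simultaneously for every coordinate j: s_j ≤ ŝ_j ≤ s_j + ε |s|₁. -/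
/-!
Split each cell of the sketch as `s j` plus the mass of the other coordinates hashed into the
same bucket. That collision mass is nonnegative, which gives `s j ≤ ŝ j`; its expectation is at
most `|s|₁ / w`, so by Markov a row overshoots by more than `ε |s|₁` with probability at most
`1 / (ε w) ≤ e⁻¹`. Independence of the rows bounds the probability that all of them overshoot
by `e^(-d) ≤ δ / N`, and a union bound over the coordinates finishes.
-/

open MeasureTheory ProbabilityTheory
open scoped ENNReal

theorem Real.mul_exp_neg_le_of_log_div_le {x δ t : ℝ} (hx : 0 ≤ x) (hδ : 0 < δ)
    (h : Real.log (x / δ) ≤ t) : x * Real.exp (-t) ≤ δ := by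
  obtain rfl | hx := hx.eq_or_lt
  · simpa using hδ.le
  rw [Real.exp_neg, ← div_eq_mul_inv, div_le_iff₀ (Real.exp_pos t), ← div_le_iff₀' hδ]
  exact (Real.log_le_iff_le_exp (by positivity)).mp h

theorem ProbabilityTheory.iIndepFun.measure_iInter_preimage_le_pow {Ω ρ β : Type*}
    [MeasurableSpace Ω] [MeasurableSpace β] [Fintype ρ] {P : Measure Ω} {H : ρ → Ω → β}
    (hH : iIndepFun H P) {S : ρ → Set β} (hS : ∀ i, MeasurableSet (S i)) {q : ℝ≥0∞}
    (hq : ∀ i, P (H i ⁻¹' S i) ≤ q) :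
    P (⋂ i, H i ⁻¹' S i) ≤ q ^ Fintype.card ρ := by
  rw [hH.meas_iInter fun i => ⟨S i, hS i, rfl⟩]
  exact Finset.prod_le_pow_card _ _ _ fun i _ => hq i

theorem MeasureTheory.ofReal_one_sub_le_prob_compl {Ω : Type*} [MeasurableSpace Ω]
    {P : Measure Ω} [IsProbabilityMeasure P] {B : Set Ω} {δ : ℝ} (hδ : 0 ≤ δ)
    (hB : P B ≤ ENNReal.ofReal δ) : ENNReal.ofReal (1 - δ) ≤ P Bᶜ :=
  calc ENNReal.ofReal (1 - δ) = P Set.univ - ENNReal.ofReal δ := by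
        rw [ENNReal.ofReal_sub _ hδ, ENNReal.ofReal_one, measure_univ]
    _ ≤ P Set.univ - P B := by gcongr
    _ ≤ P Bᶜ := by rw [Set.compl_eq_univ_sdiff]; exact le_measure_sdiff

namespace CountMinSketch

variable {ι κ : Type*} [Fintype ι] [DecidableEq ι] [DecidableEq κ] {s : ι → ℝ}

/-- The Count-Min cell `CMS(i, h_i j)` of a row hashed by `h`. -/
def bucketSum (s : ι → ℝ) (h : ι → κ) (j : ι) : ℝ :=
  ∑ j' ∈ Finset.univ.filter (fun j' => h j' = h j), s j'

def collisionSum (s : ι → ℝ) (h : ι → κ) (j : ι) : ℝ :=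
  ∑ j' ∈ (Finset.univ.erase j).filter (fun j' => h j' = h j), s j'

theorem bucketSum_eq_add_collisionSum (s : ι → ℝ) (h : ι → κ) (j : ι) :
    bucketSum s h j = s j + collisionSum s h j := by
  rw [bucketSum, collisionSum, Finset.filter_erase, Finset.add_sum_erase]
  simp

theorem collisionSum_nonneg (hs : ∀ j, 0 ≤ s j) (h : ι → κ) (j : ι) :
    0 ≤ collisionSum s h j :=
  Finset.sum_nonneg fun j' _ => hs j'

theorem collisionSum_le_sum (hs : ∀ j, 0 ≤ s j) (h : ι → κ) (j : ι) :
    collisionSum s h j ≤ ∑ j', s j' :=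
  Finset.sum_le_sum_of_subset_of_nonneg (Finset.subset_univ _) fun j' _ _ => hs j'

theorem le_iInf_bucketSum {ρ : Type*} [Nonempty ρ] (hs : ∀ j, 0 ≤ s j) (H : ρ → ι → κ)
    (j : ι) : s j ≤ ⨅ i, bucketSum s (H i) j :=
  le_ciInf fun i => by
    rw [bucketSum_eq_add_collisionSum]
    linarith [collisionSum_nonneg hs (H i) j]

theorem iInf_bucketSum_le {ρ : Type*} [Finite ρ] {H : ρ → ι → κ} {j : ι} {t : ℝ} (i : ρ)
    (hi : collisionSum s (H i) j ≤ t) : ⨅ i, bucketSum s (H i) j ≤ s j + t :=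
  ciInf_le_of_le (Set.finite_range _).bddBelow i <| by
    rw [bucketSum_eq_add_collisionSum]
    linarith

section Probability

variable [MeasurableSpace κ] [MeasurableEq κ]

theorem measurable_collisionSum (s : ι → ℝ) (j : ι) :
    Measurable fun h : ι → κ => collisionSum s h j := by
  simp_rw [collisionSum, Finset.sum_filter]
  exact Finset.measurable_sum _ fun j' _ =>
    Measurable.ite (measurableSet_eq_fun (measurable_pi_apply j') (measurable_pi_apply j))
      measurable_const measurable_const

variable {Ω : Type*} [MeasurableSpace Ω] (P : Measure Ω) {g : Ω → ι → κ}

theorem lintegral_ofReal_collisionSum (hs : ∀ j, 0 ≤ s j) (hg : Measurable g) (j : ι) :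
    ∫⁻ ω, ENNReal.ofReal (collisionSum s (g ω) j) ∂P =
      ∑ j' ∈ Finset.univ.erase j, ENNReal.ofReal (s j') * P {ω | g ω j' = g ω j} := by
  have hcoll : ∀ j', MeasurableSet {ω | g ω j' = g ω j} := fun j' =>
    measurableSet_eq_fun hg.eval hg.eval
  have hpointwise : ∀ ω, ENNReal.ofReal (collisionSum s (g ω) j) =
      ∑ j' ∈ Finset.univ.erase j,
        {ω | g ω j' = g ω j}.indicator (fun _ => ENNReal.ofReal (s j')) ω := by
    intro ω
    rw [collisionSum, Finset.sum_filter,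
      ENNReal.ofReal_sum_of_nonneg fun j' _ => by split_ifs <;> simp [hs j']]
    refine Finset.sum_congr rfl fun j' _ => ?_
    by_cases h : g ω j' = g ω j <;> simp [h]
  simp_rw [hpointwise]
  rw [lintegral_finsetSum _ fun j' _ => measurable_const.indicator (hcoll j')]
  exact Finset.sum_congr rfl fun j' _ => lintegral_indicator_const (hcoll j') _

theorem measure_lt_collisionSum_le (hs : ∀ j, 0 ≤ s j) (hg : Measurable g) (j : ι)
    {p : ℝ≥0∞} (hcol : ∀ j', j' ≠ j → P {ω | g ω j' = g ω j} ≤ p) {ε : ℝ} (hε : 0 < ε) :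
    P {ω | ε * ∑ j', s j' < collisionSum s (g ω) j} ≤ p / ENNReal.ofReal ε := by
  set T := ∑ j', s j'
  have hT0 : 0 ≤ T := Finset.sum_nonneg fun j' _ => hs j'
  obtain hT | hT := hT0.eq_or_lt
  · have hempty : {ω | ε * T < collisionSum s (g ω) j} = ∅ :=
      Set.eq_empty_of_forall_notMem fun ω hω => by
        have hle : collisionSum s (g ω) j ≤ T := collisionSum_le_sum hs (g ω) j
        rw [Set.mem_ofPred_eq, ← hT, mul_zero] at hω
        linarith
    simp [hempty]
  have hεT : 0 < ε * T := mul_pos hε hT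
  have hmean : ∫⁻ ω, ENNReal.ofReal (collisionSum s (g ω) j) ∂P ≤ ENNReal.ofReal T * p :=
    calc ∫⁻ ω, ENNReal.ofReal (collisionSum s (g ω) j) ∂P
        = ∑ j' ∈ Finset.univ.erase j, ENNReal.ofReal (s j') * P {ω | g ω j' = g ω j} :=
          lintegral_ofReal_collisionSum P hs hg j
      _ ≤ ∑ j' ∈ Finset.univ.erase j, ENNReal.ofReal (s j') * p :=
          Finset.sum_le_sum fun j' hj' => by gcongr; exact hcol j' (Finset.ne_of_mem_erase hj')
      _ = ENNReal.ofReal (∑ j' ∈ Finset.univ.erase j, s j') * p := by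
          rw [← Finset.sum_mul, ENNReal.ofReal_sum_of_nonneg fun j' _ => hs j']
      _ ≤ ENNReal.ofReal T * p := by
          gcongr
          exact Finset.sum_le_sum_of_subset_of_nonneg (Finset.subset_univ _)
            fun j' _ _ => hs j'
  calc P {ω | ε * T < collisionSum s (g ω) j}
      ≤ P {ω | ENNReal.ofReal (ε * T) ≤ ENNReal.ofReal (collisionSum s (g ω) j)} :=
        measure_mono fun ω hω => ENNReal.ofReal_le_ofReal (le_of_lt hω)
    _ ≤ (∫⁻ ω, ENNReal.ofReal (collisionSum s (g ω) j) ∂P) / ENNReal.ofReal (ε * T) :=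
        meas_ge_le_lintegral_div
          ((measurable_collisionSum s j).comp hg).ennreal_ofReal.aemeasurable
          (ENNReal.ofReal_pos.mpr hεT).ne' ENNReal.ofReal_ne_top
    _ ≤ ENNReal.ofReal T * p / ENNReal.ofReal (ε * T) := by gcongr
    _ = p / ENNReal.ofReal ε := by
        rw [ENNReal.ofReal_mul hε.le, mul_comm (ENNReal.ofReal ε),
          ENNReal.mul_div_mul_left _ _ (ENNReal.ofReal_pos.mpr hT).ne' ENNReal.ofReal_ne_top]

theorem measure_lt_collisionSum_le_exp_neg_one (hs : ∀ j, 0 ≤ s j) (hg : Measurable g) (j : ι)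
    {w : ℕ} (hcol : ∀ j', j' ≠ j → P {ω | g ω j' = g ω j} ≤ (w : ℝ≥0∞)⁻¹) {ε : ℝ} (hε : 0 < ε)
    (hw : Real.exp 1 / ε ≤ w) :
    P {ω | ε * ∑ j', s j' < collisionSum s (g ω) j} ≤ ENNReal.ofReal (Real.exp (-1)) := by
  refine (measure_lt_collisionSum_le P hs hg j hcol hε).trans ?_
  rw [ENNReal.div_eq_inv_mul, ← ENNReal.mul_inv (by simp) (by simp), Real.exp_neg,
    ENNReal.ofReal_inv_of_pos (Real.exp_pos 1), ENNReal.inv_le_inv,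
    ← ENNReal.ofReal_natCast, ← ENNReal.ofReal_mul hε.le]
  exact ENNReal.ofReal_le_ofReal ((div_le_iff₀' hε).mp hw)

end Probability

end CountMinSketch

open CountMinSketch

theorem count_min_sketch_guarantee_general {Ω : Type*} [MeasurableSpace Ω]
    (P : Measure Ω) [IsProbabilityMeasure P]
    (N w d : ℕ) (hd : 1 ≤ d)
    (s : Fin N → ℝ) (hs : ∀ j, 0 ≤ s j)
    (ε δ : ℝ) (hε : 0 < ε) (hδ0 : 0 < δ)
    (hw : Real.exp 1 / ε ≤ (w : ℝ)) (hdlog : Real.log ((N : ℝ) / δ) ≤ (d : ℝ))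
    (H : Fin d → Ω → Fin N → Fin w)
    (hHm : ∀ i, Measurable (H i))
    (hindep : iIndepFun H P)
    (hcol : ∀ (i : Fin d) (j j' : Fin N), j' ≠ j →
        P {ω | H i ω j' = H i ω j} ≤ ((w : ℝ≥0∞))⁻¹) :
    ENNReal.ofReal (1 - δ) ≤
      P {ω | ∀ j : Fin N,
        s j ≤ (⨅ i : Fin d,
            ∑ j' ∈ Finset.univ.filter (fun j' => H i ω j' = H i ω j), s j') ∧
        (⨅ i : Fin d,
            ∑ j' ∈ Finset.univ.filter (fun j' => H i ω j' = H i ω j), s j')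
          ≤ s j + ε * ∑ j', s j'} := by
  have : Nonempty (Fin d) := Fin.pos_iff_nonempty.mp hd
  set bad : Fin N → Set Ω := fun j => ⋂ i, H i ⁻¹' {h | ε * ∑ j', s j' < collisionSum s h j}
  have hbad : ∀ j, P (bad j) ≤ ENNReal.ofReal (Real.exp (-d)) := fun j =>
    calc P (bad j) ≤ ENNReal.ofReal (Real.exp (-1)) ^ Fintype.card (Fin d) :=
          hindep.measure_iInter_preimage_le_pow
            (fun _ => measurableSet_lt measurable_const (measurable_collisionSum s j))
            fun i => measure_lt_collisionSum_le_exp_neg_one P hs (hHm i) j (hcol i j) hε hw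
      _ = ENNReal.ofReal (Real.exp (-d)) := by
          rw [Fintype.card_fin, ← ENNReal.ofReal_pow (Real.exp_pos _).le, ← Real.exp_nat_mul]
          ring_nf
  have hunion : P (⋃ j, bad j) ≤ ENNReal.ofReal δ :=
    calc P (⋃ j, bad j) ≤ ∑ j, P (bad j) := measure_iUnion_fintype_le P bad
      _ ≤ ∑ _j : Fin N, ENNReal.ofReal (Real.exp (-d)) := Finset.sum_le_sum fun j _ => hbad j
      _ = ENNReal.ofReal (N * Real.exp (-d)) := by simp [ENNReal.ofReal_mul]
      _ ≤ ENNReal.ofReal δ := ENNReal.ofReal_le_ofReal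
          (Real.mul_exp_neg_le_of_log_div_le N.cast_nonneg hδ0 hdlog)
  have hgood : (⋃ j, bad j)ᶜ ⊆ {ω | ∀ j : Fin N, s j ≤ ⨅ i, bucketSum s (H i ω) j ∧
      ⨅ i, bucketSum s (H i ω) j ≤ s j + ε * ∑ j', s j'} := by
    intro ω hω j
    simp only [bad, Set.mem_compl_iff, Set.mem_iUnion, Set.mem_iInter, Set.mem_preimage,
      Set.mem_ofPred_eq, not_exists, not_forall, not_lt] at hω
    obtain ⟨i, hi⟩ := hω j
    exact ⟨le_iInf_bucketSum hs _ j, iInf_bucketSum_le i hi⟩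
  exact (ofReal_one_sub_le_prob_compl hδ0.le hunion).trans (measure_mono hgood)

/-- Count-Min Sketch guarantee: with `w ≥ e/ε` columns and `d ≥ ln(N/δ)` mutually
independent universal hash rows, with probability at least `1 - δ`, simultaneously for
every coordinate `j`, the recovered value `ŝ_j = min_i CMS(i, H_i j)` satisfies
`s_j ≤ ŝ_j ≤ s_j + ε |s|₁`. -/
theorem count_min_sketch_guarantee {Ω : Type*} [MeasurableSpace Ω]
    (P : Measure Ω) [IsProbabilityMeasure P]
    (N w d : ℕ) (hN : 1 ≤ N) (hd : 1 ≤ d)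
    (s : Fin N → ℝ) (hs : ∀ j, 0 ≤ s j)
    (ε δ : ℝ) (hε : 0 < ε) (hδ0 : 0 < δ) (hδ1 : δ < 1)
    (hw : Real.exp 1 / ε ≤ (w : ℝ)) (hdlog : Real.log ((N : ℝ) / δ) ≤ (d : ℝ))
    (H : Fin d → Ω → Fin N → Fin w)
    (hHm : ∀ i, Measurable (H i))
    (hindep : iIndepFun H P)
    (hcol : ∀ (i : Fin d) (j j' : Fin N), j' ≠ j →
        P {ω | H i ω j' = H i ω j} ≤ ((w : ℝ≥0∞))⁻¹) :
    ENNReal.ofReal (1 - δ) ≤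
      P {ω | ∀ j : Fin N,
        s j ≤ (⨅ i : Fin d,
            ∑ j' ∈ Finset.univ.filter (fun j' => H i ω j' = H i ω j), s j') ∧
        (⨅ i : Fin d,
            ∑ j' ∈ Finset.univ.filter (fun j' => H i ω j' = H i ω j), s j')
          ≤ s j + ε * ∑ j', s j'} :=
  count_min_sketch_guarantee_general P N w d hd s hs ε δ hε hδ0 hw hdlog H hHm hindep hcol
end

section
/- Let N ≥ 1, let 1 ≤ v < N, and let p_1 ≥ p_2 ≥ … ≥ p_N be real numbers with 0 < p_i ≤ 1 for all i and p_{v+1} < p_v. Set Δ = p_{v+1}/p_v ∈ (0,1) and B = Σ_{i=v+1}^N (p_i / p_{v+1})^{K/2}. If K > 0 is a real number satisfying K ≥ 2 ln B / ln(1/Δ) (equivalently Δ^{−K/2} ≥ B), then p_v^{K/2} ≥ Σ_{i=v+1}^N p_i^{K/2}, and consequently Σ_{i=1}^N p_i^{K/2} ≤ v + 1 and Σ_{i=1}^N p_i^K ≤ v + 1 (all powers are real powers). -/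
/-!
Write `t = K / 2`. Factoring `p_{v+1}^t` out of the tail gives
`∑_{i>v} p_i^t = B p_{v+1}^t = B Δ^t p_v^t`, and the choice of `K` is exactly `B Δ^t ≤ 1`.
The first `v` terms are each at most `1`, and the tail is at most `p_v^t ≤ 1`, which bounds
`∑ p_i^t` by `v + 1`; since `p_i ≤ 1`, also `p_i^K ≤ p_i^t`.
-/

open Finset Real

lemma mul_rpow_le_one_of_log_div_log_inv_le {B Δ t : ℝ} (hB : 0 ≤ B) (hΔ0 : 0 < Δ)
    (hΔ1 : Δ < 1) (h : log B / log (1 / Δ) ≤ t) : B * Δ ^ t ≤ 1 := by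
  rcases hB.eq_or_lt with rfl | hB
  · simp
  have hlog : 0 < log (1 / Δ) := log_pos ((one_lt_div hΔ0).mpr hΔ1)
  have hBt : log B ≤ -(t * log Δ) := by
    rw [div_le_iff₀ hlog, one_div, log_inv] at h
    linarith
  rw [← log_nonpos_iff (by positivity), log_mul hB.ne' (rpow_pos_of_pos hΔ0 t).ne',
    log_rpow hΔ0]
  linarith

lemma sum_rpow_eq_sum_div_rpow_mul {ι : Type*} {s : Finset ι} {a : ι → ℝ}
    (ha : ∀ i ∈ s, 0 ≤ a i) {q : ℝ} (hq : 0 < q) (t : ℝ) :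
    ∑ i ∈ s, a i ^ t = (∑ i ∈ s, (a i / q) ^ t) * q ^ t := by
  rw [sum_mul]
  refine sum_congr rfl fun i hi => ?_
  rw [div_rpow (ha i hi) hq.le, div_mul_cancel₀ _ (rpow_pos_of_pos hq t).ne']

lemma sum_rpow_le_rpow_of_mul_div_rpow_le_one {ι : Type*} {s : Finset ι} {a : ι → ℝ}
    (ha : ∀ i ∈ s, 0 ≤ a i) {q r t : ℝ} (hq : 0 < q) (hr : 0 < r)
    (h : (∑ i ∈ s, (a i / q) ^ t) * (q / r) ^ t ≤ 1) : ∑ i ∈ s, a i ^ t ≤ r ^ t :=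
  calc ∑ i ∈ s, a i ^ t = (∑ i ∈ s, (a i / q) ^ t) * (q / r) ^ t * r ^ t := by
        rw [sum_rpow_eq_sum_div_rpow_mul ha hq, mul_assoc,
          ← mul_rpow (div_pos hq hr).le hr.le, div_mul_cancel₀ _ hr.ne']
    _ ≤ 1 * r ^ t := by gcongr
    _ = r ^ t := one_mul _

lemma sum_rpow_le_card {ι : Type*} {s : Finset ι} {a : ι → ℝ} (ha0 : ∀ i ∈ s, 0 ≤ a i)
    (ha1 : ∀ i ∈ s, a i ≤ 1) {t : ℝ} (ht : 0 ≤ t) : ∑ i ∈ s, a i ^ t ≤ #s := by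
  simpa using sum_le_card_nsmul s (fun i => a i ^ t) 1 fun i hi =>
    rpow_le_one (ha0 i hi) (ha1 i hi) ht

lemma sum_Icc_one_eq_add {M : Type*} [AddCommMonoid M] (f : ℕ → M) {v N : ℕ} (hvN : v ≤ N) :
    ∑ i ∈ Icc 1 N, f i = ∑ i ∈ Icc 1 v, f i + ∑ i ∈ Icc (v + 1) N, f i := by
  simpa only [← Icc_add_one_left_eq_Ioc, zero_add] using
    (sum_Ioc_consecutive f (Nat.zero_le v) hvN).symm

theorem choose_K_sparsity_general (N v : ℕ) (hv : 1 ≤ v) (hvN : v < N)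
    (p : ℕ → ℝ)
    (hpos : ∀ i, 1 ≤ i → i ≤ N → 0 < p i)
    (hle1 : ∀ i, 1 ≤ i → i ≤ N → p i ≤ 1)
    (hgap : p (v + 1) < p v)
    (Δ B K : ℝ) (hΔ : Δ = p (v + 1) / p v)
    (hB : B = ∑ i ∈ Finset.Icc (v + 1) N, (p i / p (v + 1)) ^ (K / 2))
    (hK0 : 0 < K) (hK : 2 * Real.log B / Real.log (1 / Δ) ≤ K) :
    (∑ i ∈ Finset.Icc (v + 1) N, p i ^ (K / 2) ≤ p v ^ (K / 2)) ∧
    (∑ i ∈ Finset.Icc 1 N, p i ^ (K / 2) ≤ (v : ℝ) + 1) ∧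
    (∑ i ∈ Finset.Icc 1 N, p i ^ K ≤ (v : ℝ) + 1) := by
  have hpv : 0 < p v := hpos v hv hvN.le
  have hpv1 : 0 < p (v + 1) := hpos (v + 1) (by omega) hvN
  have hp0 : ∀ i ∈ Icc 1 N, 0 ≤ p i := fun i hi => (hpos i (mem_Icc.1 hi).1 (mem_Icc.1 hi).2).le
  have hp1 : ∀ i ∈ Icc 1 N, p i ≤ 1 := fun i hi => hle1 i (mem_Icc.1 hi).1 (mem_Icc.1 hi).2
  have hIcc_tail : Icc (v + 1) N ⊆ Icc 1 N := Icc_subset_Icc (by omega) le_rfl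
  have hIcc_head : Icc 1 v ⊆ Icc 1 N := Icc_subset_Icc le_rfl hvN.le
  have hBΔ : B * Δ ^ (K / 2) ≤ 1 := by
    refine mul_rpow_le_one_of_log_div_log_inv_le ?_ (hΔ ▸ div_pos hpv1 hpv)
      (hΔ ▸ (div_lt_one hpv).2 hgap) (by rw [mul_div_assoc] at hK; linarith)
    exact hB ▸ sum_nonneg fun i hi => rpow_nonneg (div_nonneg (hp0 i (hIcc_tail hi)) hpv1.le) _
  have tail : ∑ i ∈ Icc (v + 1) N, p i ^ (K / 2) ≤ p v ^ (K / 2) :=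
    sum_rpow_le_rpow_of_mul_div_rpow_le_one (fun i hi => hp0 i (hIcc_tail hi)) hpv1 hpv
      (hB ▸ hΔ ▸ hBΔ)
  have half : ∑ i ∈ Icc 1 N, p i ^ (K / 2) ≤ v + 1 := by
    have head := sum_rpow_le_card (fun i hi => hp0 i (hIcc_head hi))
      (fun i hi => hp1 i (hIcc_head hi)) (half_pos hK0).le
    have hpv_le : p v ^ (K / 2) ≤ 1 := rpow_le_one hpv.le (hle1 v hv hvN.le) (half_pos hK0).le
    rw [Nat.card_Icc, Nat.add_sub_cancel] at head
    rw [sum_Icc_one_eq_add _ hvN.le]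
    linarith
  refine ⟨tail, half, le_trans (sum_le_sum fun i hi => ?_) half⟩
  exact rpow_le_rpow_of_exponent_ge (hpos i (mem_Icc.1 hi).1 (mem_Icc.1 hi).2) (hp1 i hi)
    (half_le_self hK0.le)

/-- Choosing the LSH power `K ≥ 2 ln B / ln(1/Δ)` (equivalently `Δ^{-K/2} ≥ B`), where
`Δ = p_{v+1}/p_v` and `B = ∑_{i=v+1}^N (p_i/p_{v+1})^{K/2}`, guarantees
`p_v^{K/2} ≥ ∑_{i=v+1}^N p_i^{K/2}` and hence `|s̃|₁ = ∑ p_i^{K/2} ≤ v + 1` and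
`|s|₁ = ∑ p_i^K ≤ v + 1` (real powers). -/
theorem choose_K_sparsity (N v : ℕ) (hv : 1 ≤ v) (hvN : v < N)
    (p : ℕ → ℝ)
    (hpos : ∀ i, 1 ≤ i → i ≤ N → 0 < p i)
    (hle1 : ∀ i, 1 ≤ i → i ≤ N → p i ≤ 1)
    (hmono : ∀ i j, 1 ≤ i → i ≤ j → j ≤ N → p j ≤ p i)
    (hgap : p (v + 1) < p v)
    (Δ B K : ℝ) (hΔ : Δ = p (v + 1) / p v)
    (hB : B = ∑ i ∈ Finset.Icc (v + 1) N, (p i / p (v + 1)) ^ (K / 2))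
    (hK0 : 0 < K) (hK : 2 * Real.log B / Real.log (1 / Δ) ≤ K) :
    (∑ i ∈ Finset.Icc (v + 1) N, p i ^ (K / 2) ≤ p v ^ (K / 2)) ∧
    (∑ i ∈ Finset.Icc 1 N, p i ^ (K / 2) ≤ (v : ℝ) + 1) ∧
    (∑ i ∈ Finset.Icc 1 N, p i ^ K ≤ (v : ℝ) + 1) :=
  choose_K_sparsity_general N v hv hvN p hpos hle1 hgap Δ B K hΔ hB hK0 hK
end
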